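/- arXiv:2106.01095 — 3 statements merged into one kernel-verified Lean document; each statement's English description precedes it below -/
import Mathlib

section
/- For any positive definite matrix A ∈ M_n(ℂ) and any nondecreasing concave function h : (0,∞) → ℝ with lim_{x→∞} h(x)/x = 0, one has Tr h(A) = inf over positive definite B ∈ M_n(ℂ) of Tr(A·B − ȟ(B)), where ȟ(t) = inf_{x>0} (t·x − h(x)) is the Legendre transform of h. -/
/-!
Diagonalize `A = ∑ aᵢ uᵢuᵢ*` and `B = ∑ bⱼ vⱼvⱼ*`. The overlaps `qᵢⱼ = |⟨uᵢ, vⱼ⟩|²` form a doubly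
stochastic matrix, so `Tr(AB) - Tr ȟ(B) - Tr h(A) = ∑ qᵢⱼ (aᵢbⱼ - ȟ(bⱼ) - h(aᵢ))`, which is
nonnegative by the Fenchel–Young inequality `ȟ(t) ≤ tx - h(x)`. Conversely, a concave nondecreasing
`h` has a supergradient `s ≥ 0` at each `aᵢ`, and `t = s + η` gives `t aᵢ - ȟ(t) ≤ h(aᵢ) + η aᵢ`;
taking `B = g(A)` with such values `g(aᵢ)` brings `Tr(AB) - Tr ȟ(B)` arbitrarily close to `Tr h(A)`.

The growth condition `h(x)/x → 0` is what keeps the set defining `ȟ(t)` bounded below; otherwise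
`sInf` would return the junk value `0`.
-/

open Matrix
open scoped ComplexOrder

noncomputable def mF (f : ℝ → ℝ) {l : ℕ} (A : Matrix (Fin l) (Fin l) ℂ) :
    Matrix (Fin l) (Fin l) ℂ :=
  if hA : A.IsHermitian then
    (hA.eigenvectorUnitary : Matrix (Fin l) (Fin l) ℂ) *
      Matrix.diagonal (fun i => (f (hA.eigenvalues i) : ℂ)) *
      star (hA.eigenvectorUnitary : Matrix (Fin l) (Fin l) ℂ)
  else 0

noncomputable def trF (f : ℝ → ℝ) {l : ℕ} (A : Matrix (Fin l) (Fin l) ℂ) : ℝ :=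
  if hA : A.IsHermitian then ∑ i, f (hA.eigenvalues i) else 0

/-- Legendre transform of a concave function on `(0, ∞)`. -/
noncomputable def legendre (h : ℝ → ℝ) (t : ℝ) : ℝ :=
  sInf ((fun x => t * x - h x) '' Set.Ioi 0)

open Set

theorem ConvexOn.add_rightDeriv_mul_sub_le {S : Set ℝ} {f : ℝ → ℝ} {l x : ℝ}
    (hf : ConvexOn ℝ S f) (hl : l ∈ interior S) (hx : x ∈ S) :
    f l + derivWithin f (Ioi l) l * (x - l) ≤ f x := by
  rcases lt_trichotomy x l with hxl | rfl | hlx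
  · have hslope := (hf.slope_le_leftDeriv_of_mem_interior hx hl hxl).trans
      (hf.leftDeriv_le_rightDeriv_of_mem_interior hl)
    rw [slope_def_field, div_le_iff₀ (sub_pos.2 hxl)] at hslope
    linarith
  · simp
  · have hslope := hf.rightDeriv_le_slope_of_mem_interior hl hx hlx
    rw [slope_def_field, le_div_iff₀ (sub_pos.2 hlx)] at hslope
    linarith

theorem ConcaveOn.exists_le_add_mul_sub {S : Set ℝ} {f : ℝ → ℝ} {l : ℝ}
    (hf : ConcaveOn ℝ S f) (hl : l ∈ interior S) :
    ∃ s, ∀ x ∈ S, f x ≤ f l + s * (x - l) := by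
  refine ⟨-derivWithin (-f) (Ioi l) l, fun x hx => ?_⟩
  have := hf.neg.add_rightDeriv_mul_sub_le hl hx
  simp only [Pi.neg_apply] at this
  linarith

section Legendre

variable {h : ℝ → ℝ}

theorem bddBelow_image_mul_sub (hmono : MonotoneOn h (Ioi 0))
    (hlim : Filter.Tendsto (fun x => h x / x) Filter.atTop (nhds 0)) {t : ℝ} (ht : 0 < t) :
    BddBelow ((fun x => t * x - h x) '' Ioi 0) := by
  obtain ⟨X, hX⟩ := Filter.eventually_atTop.mp (hlim.eventually (gt_mem_nhds ht))
  set Y := max X 1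
  have hY : 0 < Y := lt_max_of_lt_right one_pos
  refine ⟨min 0 (-h Y), ?_⟩
  rintro _ ⟨x, hx : 0 < x, rfl⟩
  rcases le_total x Y with hxY | hYx
  · have : h x ≤ h Y := hmono hx hY hxY
    nlinarith [min_le_right 0 (-h Y)]
  · have := hX x ((le_max_left X 1).trans hYx)
    rw [div_lt_iff₀ hx] at this
    linarith [min_le_left 0 (-h Y)]

theorem legendre_le_mul_sub (hmono : MonotoneOn h (Ioi 0))
    (hlim : Filter.Tendsto (fun x => h x / x) Filter.atTop (nhds 0)) {t x : ℝ}
    (ht : 0 < t) (hx : 0 < x) : legendre h t ≤ t * x - h x :=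
  csInf_le (bddBelow_image_mul_sub hmono hlim ht) ⟨x, hx, rfl⟩

theorem exists_pos_mul_sub_legendre_lt (hmono : MonotoneOn h (Ioi 0))
    (hconc : ConcaveOn ℝ (Ioi 0) h) {l ε : ℝ} (hl : 0 < l) (hε : 0 < ε) :
    ∃ t, 0 < t ∧ t * l - legendre h t < h l + ε := by
  obtain ⟨s, hs⟩ := hconc.exists_le_add_mul_sub (l := l) (by rwa [interior_Ioi])
  have hs_nonneg : 0 ≤ s := by
    have hsup := hs (l + 1) (by simp only [mem_Ioi]; linarith)
    have hmon : h l ≤ h (l + 1) := hmono hl (by simp only [mem_Ioi]; linarith) (by linarith)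
    linarith
  have hη : 0 < ε / (2 * l) := by positivity
  refine ⟨s + ε / (2 * l), by positivity, ?_⟩
  have hleg : s * l - h l ≤ legendre h (s + ε / (2 * l)) := by
    refine le_csInf (nonempty_Ioi.image _) ?_
    rintro _ ⟨x, hx : 0 < x, rfl⟩
    nlinarith [hs x hx]
  have : ε / (2 * l) * l = ε / 2 := by field_simp
  nlinarith

end Legendre

namespace Matrix

variable {ι 𝕜 : Type*} [Fintype ι] [DecidableEq ι] [RCLike 𝕜]

theorem sum_norm_sq_row_of_mem_unitaryGroup {W : Matrix ι ι 𝕜} (hW : W ∈ unitaryGroup ι 𝕜)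
    (i : ι) : ∑ j, ‖W i j‖ ^ 2 = 1 := by
  have := congr_fun (congr_fun (mem_unitaryGroup_iff.mp hW) i) i
  simp only [mul_apply, star_apply, RCLike.star_def, RCLike.mul_conj, one_apply_eq] at this
  exact_mod_cast this

theorem sum_norm_sq_col_of_mem_unitaryGroup {W : Matrix ι ι 𝕜} (hW : W ∈ unitaryGroup ι 𝕜)
    (j : ι) : ∑ i, ‖W i j‖ ^ 2 = 1 := by
  simpa [star_apply] using sum_norm_sq_row_of_mem_unitaryGroup (Unitary.star_mem hW) j

theorem IsHermitian.re_trace_mul {A B : Matrix ι ι 𝕜} (hA : A.IsHermitian) (hB : B.IsHermitian) :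
    RCLike.re (trace (A * B)) = ∑ i, ∑ j, hA.eigenvalues i * hB.eigenvalues j *
      ‖((star hA.eigenvectorUnitary * hB.eigenvectorUnitary : unitaryGroup ι 𝕜) :
        Matrix ι ι 𝕜) i j‖ ^ 2 := by
  set W : unitaryGroup ι 𝕜 := star hA.eigenvectorUnitary * hB.eigenvectorUnitary with hW
  have hconj : trace (A * B) = trace (diagonal (RCLike.ofReal ∘ hA.eigenvalues) *
      (W : Matrix ι ι 𝕜) * diagonal (RCLike.ofReal ∘ hB.eigenvalues) *
      star (W : Matrix ι ι 𝕜)) := by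
    conv_lhs => rw [hA.spectral_theorem, hB.spectral_theorem]
    simp only [hW, Unitary.conjStarAlgAut_apply, Submonoid.coe_mul, Unitary.coe_star, star_mul,
      star_star, Matrix.mul_assoc]
    rw [trace_mul_comm]
    simp only [Matrix.mul_assoc]
  rw [hconj]
  simp only [trace, diag, mul_apply, diagonal_apply, star_apply, Function.comp_apply,
    ite_mul, zero_mul, mul_ite, mul_zero, Finset.sum_ite_eq, Finset.sum_ite_eq',
    Finset.mem_univ, if_true, map_sum]
  refine Finset.sum_congr rfl fun i _ => Finset.sum_congr rfl fun j _ => ?_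
  rw [← RCLike.ofReal_re (K := 𝕜) (_ * _ * _)]
  congr 1
  push_cast
  rw [← RCLike.mul_conj, RCLike.star_def]
  ring

theorem IsHermitian.re_trace_cfc {A : Matrix ι ι 𝕜} (hA : A.IsHermitian) (f : ℝ → ℝ) :
    RCLike.re (trace (cfc f A)) = ∑ i, f (hA.eigenvalues i) := by
  rw [hA.cfc_eq, IsHermitian.cfc, Unitary.conjStarAlgAut_apply, trace_mul_cycle,
    Unitary.coe_star_mul_self, one_mul, trace_diagonal, map_sum]
  simp

theorem IsHermitian.mul_cfc {A : Matrix ι ι 𝕜} (hA : A.IsHermitian) (g : ℝ → ℝ) :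
    A * cfc g A = cfc (fun x => x * g x) A := by
  rw [cfc_mul _ _ A (finite_real_spectrum.continuousOn _) (finite_real_spectrum.continuousOn _),
    cfc_id' ℝ A hA.isSelfAdjoint]

theorem IsHermitian.cfc_cfc {A : Matrix ι ι 𝕜} (hA : A.IsHermitian) (f g : ℝ → ℝ) :
    cfc f (cfc g A) = cfc (fun x => f (g x)) A :=
  (cfc_comp' f g A ((finite_real_spectrum.image g).continuousOn _)
    (finite_real_spectrum.continuousOn _) hA.isSelfAdjoint).symm

open scoped MatrixOrder in
theorem PosDef.posDef_cfc {A : Matrix ι ι 𝕜} (hA : A.PosDef) {g : ℝ → ℝ}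
    (hg : ∀ x, 0 < x → 0 < g x) : (cfc g A).PosDef := by
  refine isStrictlyPositive_iff_posDef.mp ((cfc_isStrictlyPositive_iff g A
    (finite_real_spectrum.continuousOn _) hA.1.isSelfAdjoint).mpr fun x hx => hg x ?_)
  obtain ⟨i, rfl⟩ := hA.1.spectrum_real_eq_range_eigenvalues ▸ hx
  exact hA.eigenvalues_pos i

end Matrix

section TraceFunctional

variable {l : ℕ}

theorem trF_of_isHermitian {A : Matrix (Fin l) (Fin l) ℂ} (hA : A.IsHermitian) (f : ℝ → ℝ) :
    trF f A = ∑ i, f (hA.eigenvalues i) :=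
  dif_pos hA

theorem trF_cfc {A : Matrix (Fin l) (Fin l) ℂ} (hA : A.IsHermitian) (f g : ℝ → ℝ) :
    trF f (cfc g A) = ∑ i, f (g (hA.eigenvalues i)) := by
  rw [trF_of_isHermitian (cfc_predicate g A).isHermitian, ← IsHermitian.re_trace_cfc,
    hA.cfc_cfc, hA.re_trace_cfc]

end TraceFunctional

section TraceDuality

variable {n : ℕ} {h : ℝ → ℝ}

theorem trF_le_re_trace_mul_sub_trF_legendre (hmono : MonotoneOn h (Ioi 0))
    (hlim : Filter.Tendsto (fun x => h x / x) Filter.atTop (nhds 0))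
    {A B : Matrix (Fin n) (Fin n) ℂ} (hA : A.PosDef) (hB : B.PosDef) :
    trF h A ≤ (trace (A * B)).re - trF (legendre h) B := by
  set W : unitaryGroup (Fin n) ℂ := star hA.1.eigenvectorUnitary * hB.1.eigenvectorUnitary
  set q : Fin n → Fin n → ℝ := fun i j => ‖(W : Matrix (Fin n) (Fin n) ℂ) i j‖ ^ 2
  have hrow : ∀ i, ∑ j, q i j = 1 := sum_norm_sq_row_of_mem_unitaryGroup W.2
  have hcol : ∀ j, ∑ i, q i j = 1 := sum_norm_sq_col_of_mem_unitaryGroup W.2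
  set a := hA.1.eigenvalues
  set b := hB.1.eigenvalues
  have hfenchel : ∀ i j, h (a i) ≤ a i * b j - legendre h (b j) := fun i j => by
    linarith [legendre_le_mul_sub hmono hlim (hB.eigenvalues_pos j) (hA.eigenvalues_pos i)]
  have hleg : ∑ i, ∑ j, q i j * legendre h (b j) = ∑ j, legendre h (b j) := by
    rw [Finset.sum_comm]
    simp only [← Finset.sum_mul, hcol, one_mul]
  rw [trF_of_isHermitian hA.1, trF_of_isHermitian hB.1,
    show (trace (A * B)).re = _ from hA.1.re_trace_mul hB.1, ← hleg]
  calc ∑ i, h (a i) = ∑ i, ∑ j, q i j * h (a i) := by simp only [← Finset.sum_mul, hrow, one_mul]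
    _ ≤ ∑ i, ∑ j, q i j * (a i * b j - legendre h (b j)) :=
      Finset.sum_le_sum fun i _ => Finset.sum_le_sum fun j _ =>
        mul_le_mul_of_nonneg_left (hfenchel i j) (sq_nonneg _)
    _ = ∑ i, ∑ j, a i * b j * q i j - ∑ i, ∑ j, q i j * legendre h (b j) := by
      rw [← Finset.sum_sub_distrib]
      refine Finset.sum_congr rfl fun i _ => ?_
      rw [← Finset.sum_sub_distrib]
      exact Finset.sum_congr rfl fun j _ => by ring

theorem exists_posDef_re_trace_mul_sub_trF_legendre_lt (hmono : MonotoneOn h (Ioi 0))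
    (hconc : ConcaveOn ℝ (Ioi 0) h) {A : Matrix (Fin n) (Fin n) ℂ} (hA : A.PosDef)
    {ε : ℝ} (hε : 0 < ε) :
    ∃ B : Matrix (Fin n) (Fin n) ℂ, B.PosDef ∧
      (trace (A * B)).re - trF (legendre h) B < trF h A + ε := by
  have hδ : 0 < ε / (n + 1) := by positivity
  choose! g hg_pos hg using fun x (hx : 0 < x) => exists_pos_mul_sub_legendre_lt hmono hconc hx hδ
  refine ⟨cfc g A, hA.posDef_cfc hg_pos, ?_⟩
  set a := hA.1.eigenvalues
  have hnδ : n * (ε / (n + 1)) < ε := by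
    rw [mul_div_assoc', div_lt_iff₀ (by positivity)]
    linarith
  have htrace : (trace (A * cfc g A)).re = ∑ i, a i * g (a i) := by
    rw [hA.1.mul_cfc]
    exact hA.1.re_trace_cfc _
  rw [htrace, trF_cfc hA.1, trF_of_isHermitian hA.1, ← Finset.sum_sub_distrib]
  calc ∑ i, (a i * g (a i) - legendre h (g (a i)))
      ≤ ∑ i, (h (a i) + ε / (n + 1)) :=
        Finset.sum_le_sum fun i _ => by linarith [hg _ (hA.eigenvalues_pos i)]
    _ = ∑ i, h (a i) + n * (ε / (n + 1)) := by simp [Finset.sum_add_distrib]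
    _ < ∑ i, h (a i) + ε := by linarith

end TraceDuality

theorem stmt0 {n : ℕ} (h : ℝ → ℝ)
    (hmono : MonotoneOn h (Set.Ioi 0)) (hconc : ConcaveOn ℝ (Set.Ioi 0) h)
    (hlim : Filter.Tendsto (fun x => h x / x) Filter.atTop (nhds 0))
    (A : Matrix (Fin n) (Fin n) ℂ) (hA : A.PosDef) :
    trF h A = sInf ((fun B : Matrix (Fin n) (Fin n) ℂ =>
        (Matrix.trace (A * B)).re - trF (legendre h) B) ''
      {B : Matrix (Fin n) (Fin n) ℂ | B.PosDef}) := by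
  symm
  refine csInf_eq_of_forall_ge_of_forall_gt_exists_lt ⟨_, 1, PosDef.one, rfl⟩ ?_ ?_
  · rintro _ ⟨B, hB, rfl⟩
    exact trF_le_re_trace_mul_sub_trF_legendre hmono hlim hA hB
  · intro w hw
    obtain ⟨B, hB, hlt⟩ := exists_posDef_re_trace_mul_sub_trF_legendre_lt hmono hconc hA
      (sub_pos.2 hw)
    exact ⟨_, ⟨B, hB, rfl⟩, by linarith⟩
end

section
/- Let f : (0,∞) → ℝ be convex on an interval J, and let C_1, …, C_k ∈ M_n(ℂ) satisfy Σᵢ Cᵢ* Cᵢ = I_n. Then for any Hermitian A_1, …, A_k ∈ M_n(ℂ) with spectra contained in J, Tr f(Σᵢ Cᵢ* Aᵢ Cᵢ) ≤ Tr(Σᵢ Cᵢ* f(Aᵢ) Cᵢ). -/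
open Matrix

/-! Diagonalize `B = ∑ Cᵢᴴ Aᵢ Cᵢ = U diag(μ) Uᴴ` and `Aᵢ = Vᵢ diag(λᵢ) Vᵢᴴ`, and put
`Tᵢ = Vᵢᴴ Cᵢ U`. Then `∑ Tᵢᴴ Tᵢ = 1` and `diag(μ) = ∑ Tᵢᴴ diag(λᵢ) Tᵢ`, so each eigenvalue `μⱼ`
is a convex combination of the `λᵢₗ` with weights `|(Tᵢ)ₗⱼ|²`. Jensen's inequality bounds `f(μⱼ)`
by the same combination of the `f(λᵢₗ)`, which is the `j`-th diagonal entry of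
`Uᴴ (∑ Cᵢᴴ f(Aᵢ) Cᵢ) U`; summing over `j` gives the trace inequality. -/

namespace Matrix

variable {𝕜 ι m n : Type*} [RCLike 𝕜] [Fintype ι] [Fintype m]

lemma conjTranspose_mul_diagonal_mul_apply_self [DecidableEq m] (T : Matrix m n 𝕜)
    (d : m → ℝ) (j : n) :
    (Tᴴ * diagonal (fun l => (d l : 𝕜)) * T) j j = ((∑ l, d l * ‖T l j‖ ^ 2 : ℝ) : 𝕜) := by
  rw [Matrix.mul_assoc, mul_apply]
  simp only [diagonal_mul, conjTranspose_apply, RCLike.ofReal_sum, RCLike.ofReal_mul,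
    RCLike.ofReal_pow, ← RCLike.conj_mul, RCLike.star_def]
  exact Finset.sum_congr rfl fun l _ => by ring

lemma star_mul_sum_conjTranspose_mul_conj_mul_mul [Fintype n] (U : Matrix n n 𝕜)
    (C : ι → Matrix m n 𝕜) (V D : ι → Matrix m m 𝕜) :
    star U * (∑ i, (C i)ᴴ * (V i * D i * star (V i)) * C i) * U =
      ∑ i, (star (V i) * C i * U)ᴴ * D i * (star (V i) * C i * U) := by
  simp only [Finset.mul_sum, Finset.sum_mul, conjTranspose_mul, star_eq_conjTranspose,
    conjTranspose_conjTranspose, Matrix.mul_assoc]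

theorem _root_.ConvexOn.map_sum_conjTranspose_mul_diagonal_mul_apply_le
    [DecidableEq m] [DecidableEq n] {J : Set ℝ} {f : ℝ → ℝ} (hf : ConvexOn ℝ J f)
    (T : ι → Matrix m n 𝕜) (hT : ∑ i, (T i)ᴴ * T i = 1) (d : ι → m → ℝ)
    (hd : ∀ i l, d i l ∈ J) (j : n) :
    f (RCLike.re ((∑ i, (T i)ᴴ * diagonal (fun l => (d i l : 𝕜)) * T i) j j)) ≤
      RCLike.re ((∑ i, (T i)ᴴ * diagonal (fun l => (f (d i l) : 𝕜)) * T i) j j) := by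
  have hsum (g : ι → m → ℝ) :
      RCLike.re ((∑ i, (T i)ᴴ * diagonal (fun l => (g i l : 𝕜)) * T i) j j) = ∑ p : ι × m, ‖T p.1 p.2 j‖ ^ 2 • g p.1 p.2 := by
    simp only [sum_apply, conjTranspose_mul_diagonal_mul_apply_self, RCLike.ofReal_re,
      ← RCLike.ofReal_sum, Fintype.sum_prod_type, smul_eq_mul, mul_comm]
  have hw : ∑ p : ι × m, ‖T p.1 p.2 j‖ ^ 2 = 1 := by
    simpa [hT] using (hsum fun _ _ => 1).symm
  simpa only [hsum] using hf.map_sum_le (fun p _ => by positivity) hw fun p _ => hd p.1 p.2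

lemma IsHermitian.eq_eigenvectorUnitary_mul_diagonal_mul_star [Fintype n] [DecidableEq n]
    {A : Matrix n n 𝕜} (hA : A.IsHermitian) :
    A = hA.eigenvectorUnitary * diagonal (fun i => (hA.eigenvalues i : 𝕜)) *
      star (hA.eigenvectorUnitary : Matrix n n 𝕜) :=
  hA.spectral_theorem

lemma IsHermitian.star_eigenvectorUnitary_mul_mul_eq_diagonal [Fintype n] [DecidableEq n]
    {A : Matrix n n 𝕜} (hA : A.IsHermitian) :
    star (hA.eigenvectorUnitary : Matrix n n 𝕜) * A * hA.eigenvectorUnitary =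
      diagonal (fun i => (hA.eigenvalues i : 𝕜)) := by
  simpa [Function.comp_def] using hA.conjStarAlgAut_star_eigenvectorUnitary

end Matrix

theorem stmt2 {n k : ℕ} (J : Set ℝ) (f : ℝ → ℝ) (hf : ConvexOn ℝ J f)
    (C A : Fin k → Matrix (Fin n) (Fin n) ℂ)
    (hC : ∑ i, (C i)ᴴ * C i = 1)
    (hA : ∀ i, (A i).IsHermitian)
    (hspec : ∀ i j, (hA i).eigenvalues j ∈ J) :
    trF f (∑ i, (C i)ᴴ * A i * C i) ≤
      (Matrix.trace (∑ i, (C i)ᴴ * mF f (A i) * C i)).re := by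
  have hB : (∑ i, (C i)ᴴ * A i * C i).IsHermitian :=
    isSelfAdjoint_sum _ fun i _ => isHermitian_conjTranspose_mul_mul _ (hA i)
  set U : Matrix (Fin n) (Fin n) ℂ := ↑hB.eigenvectorUnitary
  set V : Fin k → Matrix (Fin n) (Fin n) ℂ := fun i => ↑(hA i).eigenvectorUnitary
  set T := fun i => star (V i) * C i * U
  have hconj := star_mul_sum_conjTranspose_mul_conj_mul_mul U C V
  have hT : ∑ i, (T i)ᴴ * T i = 1 := by
    have hV (i : Fin k) : V i * star (V i) = 1 :=
      Unitary.mul_star_self_of_mem (hA i).eigenvectorUnitary.2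
    have := hconj fun _ => 1
    simp only [Matrix.mul_one, hV, hC] at this
    rw [← this, Unitary.star_mul_self_of_mem hB.eigenvectorUnitary.2]
  have hB_diag : star U * (∑ i, (C i)ᴴ * A i * C i) * U =
      ∑ i, (T i)ᴴ * diagonal (fun l => ((hA i).eigenvalues l : ℂ)) * T i := by
    conv_lhs => enter [1, 2, 2, i]; rw [(hA i).eq_eigenvectorUnitary_mul_diagonal_mul_star]
    exact hconj _
  have hR : star U * (∑ i, (C i)ᴴ * mF f (A i) * C i) * U =
      ∑ i, (T i)ᴴ * diagonal (fun l => (f ((hA i).eigenvalues l) : ℂ)) * T i := by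
    simp only [mF, dif_pos (hA _)]
    exact hconj _
  calc trF f (∑ i, (C i)ᴴ * A i * C i)
      = ∑ j, f (RCLike.re ((star U * (∑ i, (C i)ᴴ * A i * C i) * U) j j)) := by
        rw [trF, dif_pos hB]
        simp [U, hB.star_eigenvectorUnitary_mul_mul_eq_diagonal]
    _ ≤ ∑ j, RCLike.re ((star U * (∑ i, (C i)ᴴ * mF f (A i) * C i) * U) j j) := by
        rw [hB_diag, hR]
        exact Finset.sum_le_sum fun j _ =>
          hf.map_sum_conjTranspose_mul_diagonal_mul_apply_le T hT _ (hspec ·) j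
    _ = (trace (star U * (∑ i, (C i)ᴴ * mF f (A i) * C i) * U)).re := by
        simp [trace, Complex.re_sum]
    _ = (trace (∑ i, (C i)ᴴ * mF f (A i) * C i)).re := by
        rw [trace_mul_cycle, Unitary.mul_star_self_of_mem hB.eigenvectorUnitary.2, Matrix.one_mul]
end

section
/- Let f : J → ℝ be monotone nondecreasing on an interval J, and let A, B be Hermitian n×n matrices with A ≤ B (in the Loewner order) and spectra of A and B contained in J. Then Tr f(A) ≤ Tr f(B). -/
/-!
For `A ≤ B` the decreasingly ordered eigenvalues satisfy `λᵢ(A) ≤ λᵢ(B)` (Courant–Fischer): the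
span of the eigenvectors of `A` for `λ₀(A), …, λᵢ(A)` and the span of those of `B` for
`λᵢ(B), …, λₙ₋₁(B)` have dimensions adding up to `n + 1`, so they share some `x ≠ 0`, and
`λᵢ(A) ‖x‖² ≤ re ⟪A x, x⟫ ≤ re ⟪B x, x⟫ ≤ λᵢ(B) ‖x‖²`.

`Matrix.IsHermitian.eigenvalues` is not sorted, but it reindexes the sorted eigenvalues by a
permutation that depends only on the index type, so the inequality holds index by index and the
trace inequality follows termwise from the monotonicity of `f`.
-/

open Matrix
open scoped ComplexOrder

open Module Submodule RCLike
open scoped InnerProductSpace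

theorem LinearIndependent.finrank_span_image {K V ι : Type*} [DivisionRing K] [AddCommGroup V]
    [Module K V] {v : ι → V} (hv : LinearIndependent K v) (s : Finset ι) :
    finrank K (span K (v '' s)) = s.card := by
  rw [Set.image_eq_range]
  exact (finrank_span_eq_card (hv.comp _ Subtype.val_injective)).trans (Fintype.card_coe s)

theorem OrthonormalBasis.inner_eq_zero_of_mem_span_image {ι 𝕜 E : Type*} [Fintype ι] [RCLike 𝕜]
    [NormedAddCommGroup E] [InnerProductSpace 𝕜 E] (b : OrthonormalBasis ι 𝕜 E) {s : Set ι}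
    {x : E} (hx : x ∈ span 𝕜 (b '' s)) {j : ι} (hj : j ∉ s) : ⟪b j, x⟫_𝕜 = 0 := by
  have hsupp := b.toBasis.repr_support_subset_of_mem_span s (by simpa using hx)
  rw [← b.repr_apply_apply, ← b.coe_toBasis_repr_apply]
  exact Finsupp.notMem_support_iff.mp fun hmem => hj (hsupp hmem)

namespace LinearMap.IsSymmetric

variable {𝕜 E : Type*} [RCLike 𝕜] [NormedAddCommGroup E] [InnerProductSpace 𝕜 E]
  [FiniteDimensional 𝕜 E] {T S : E →ₗ[𝕜] E} {n : ℕ}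

theorem re_inner_apply_self_eq_sum (hT : T.IsSymmetric) (hn : finrank 𝕜 E = n) (x : E) :
    re ⟪T x, x⟫_𝕜 = ∑ i, hT.eigenvalues hn i * ‖⟪hT.eigenvectorBasis hn i, x⟫_𝕜‖ ^ 2 := by
  set b := hT.eigenvectorBasis hn
  rw [← b.sum_inner_mul_inner, map_sum]
  refine Finset.sum_congr rfl fun i _ => ?_
  rw [hT, apply_eigenvectorBasis, inner_smul_right, mul_assoc, ← inner_conj_symm x,
    RCLike.conj_mul, re_ofReal_mul, ← ofReal_pow, ofReal_re]

theorem mul_norm_sq_le_re_inner_of_mem_span (hT : T.IsSymmetric) (hn : finrank 𝕜 E = n)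
    {s : Set (Fin n)} {c : ℝ} (hc : ∀ j ∈ s, c ≤ hT.eigenvalues hn j) {x : E}
    (hx : x ∈ span 𝕜 (hT.eigenvectorBasis hn '' s)) :
    c * ‖x‖ ^ 2 ≤ re ⟪T x, x⟫_𝕜 := by
  rw [re_inner_apply_self_eq_sum, ← (hT.eigenvectorBasis hn).sum_sq_norm_inner_right,
    Finset.mul_sum]
  refine Finset.sum_le_sum fun j _ => ?_
  by_cases hj : j ∈ s
  · gcongr
    exact hc j hj
  · simp [(hT.eigenvectorBasis hn).inner_eq_zero_of_mem_span_image hx hj]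

theorem re_inner_le_mul_norm_sq_of_mem_span (hT : T.IsSymmetric) (hn : finrank 𝕜 E = n)
    {s : Set (Fin n)} {c : ℝ} (hc : ∀ j ∈ s, hT.eigenvalues hn j ≤ c) {x : E}
    (hx : x ∈ span 𝕜 (hT.eigenvectorBasis hn '' s)) :
    re ⟪T x, x⟫_𝕜 ≤ c * ‖x‖ ^ 2 := by
  rw [re_inner_apply_self_eq_sum, ← (hT.eigenvectorBasis hn).sum_sq_norm_inner_right,
    Finset.mul_sum]
  refine Finset.sum_le_sum fun j _ => ?_
  by_cases hj : j ∈ s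
  · gcongr
    exact hc j hj
  · simp [(hT.eigenvectorBasis hn).inner_eq_zero_of_mem_span_image hx hj]

theorem eigenvalues_le_eigenvalues_of_isPositive_sub (hT : T.IsSymmetric) (hS : S.IsSymmetric)
    (hn : finrank 𝕜 E = n) (hST : (S - T).IsPositive) (i : Fin n) :
    hT.eigenvalues hn i ≤ hS.eigenvalues hn i := by
  set U := span 𝕜 (hT.eigenvectorBasis hn '' ↑(Finset.Iic i))
  set V := span 𝕜 (hS.eigenvectorBasis hn '' ↑(Finset.Ici i))
  have hdim : finrank 𝕜 E < finrank 𝕜 U + finrank 𝕜 V := by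
    rw [(hT.eigenvectorBasis hn).orthonormal.linearIndependent.finrank_span_image,
      (hS.eigenvectorBasis hn).orthonormal.linearIndependent.finrank_span_image,
      Fin.card_Iic, Fin.card_Ici]
    omega
  obtain ⟨x, hxU, hxV, hx⟩ : ∃ x ∈ U, x ∈ V ∧ x ≠ 0 := by
    have := mt finrank_add_finrank_le_of_disjoint hdim.not_ge
    simpa [disjoint_def] using this
  have hTS : re ⟪T x, x⟫_𝕜 ≤ re ⟪S x, x⟫_𝕜 := by
    have := hST.re_inner_nonneg_left x
    rw [sub_apply, inner_sub_left, map_sub] at this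
    linarith
  have key := calc
    hT.eigenvalues hn i * ‖x‖ ^ 2 ≤ re ⟪T x, x⟫_𝕜 :=
      hT.mul_norm_sq_le_re_inner_of_mem_span hn
        (fun j hj => hT.eigenvalues_antitone hn (Finset.mem_Iic.mp hj)) hxU
    _ ≤ re ⟪S x, x⟫_𝕜 := hTS
    _ ≤ hS.eigenvalues hn i * ‖x‖ ^ 2 :=
      hS.re_inner_le_mul_norm_sq_of_mem_span hn
        (fun j hj => hS.eigenvalues_antitone hn (Finset.mem_Ici.mp hj)) hxV
  exact le_of_mul_le_mul_right key (by positivity)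

end LinearMap.IsSymmetric

theorem Matrix.IsHermitian.eigenvalues_le_eigenvalues_of_posSemidef_sub {𝕜 ι : Type*} [RCLike 𝕜]
    [Fintype ι] [DecidableEq ι] {A B : Matrix ι ι 𝕜} (hA : A.IsHermitian) (hB : B.IsHermitian)
    (hAB : (B - A).PosSemidef) (i : ι) : hA.eigenvalues i ≤ hB.eigenvalues i :=
  LinearMap.IsSymmetric.eigenvalues_le_eigenvalues_of_isPositive_sub _ _ _
    (by rwa [← map_sub, isPositive_toEuclideanLin_iff]) _

theorem stmt4 {n : ℕ} (J : Set ℝ) (f : ℝ → ℝ) (hf : MonotoneOn f J)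
    (A B : Matrix (Fin n) (Fin n) ℂ) (hA : A.IsHermitian) (hB : B.IsHermitian)
    (hle : (B - A).PosSemidef)
    (hsA : ∀ i, hA.eigenvalues i ∈ J) (hsB : ∀ i, hB.eigenvalues i ∈ J) :
    trF f A ≤ trF f B := by
  rw [trF, trF, dif_pos hA, dif_pos hB]
  exact Finset.sum_le_sum fun i _ =>
    hf (hsA i) (hsB i) (hA.eigenvalues_le_eigenvalues_of_posSemidef_sub hB hle i)
end
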